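/- arXiv:1309.4422 — 2 statements merged into one kernel-verified Lean document; each statement's English description precedes it below -/
import Mathlib

section
/- If (X, Y) is bivariate normal with E X = E Y = 0, Var X = σ_X², Var Y = σ_Y² and correlation ρ, then the product XY has the Variance-Gamma distribution VG₁(1, ρσ_Xσ_Y, σ_Xσ_Y√(1−ρ²), 0). -/
open MeasureTheory ProbabilityTheory

/-- The modified Bessel function of the second kind, via the standard integral
representation `K_ν(x) = ∫_0^∞ exp(-x cosh t) cosh(ν t) dt` (valid for `x > 0`). -/
noncomputable def besselK (ν x : ℝ) : ℝ :=
  ∫ t in Set.Ioi (0 : ℝ), Real.exp (-x * Real.cosh t) * Real.cosh (ν * t)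

/-- The modified Bessel function of the first kind
`I_ν(x) = ∑_{k≥0} (x/2)^{ν+2k} / (Γ(ν+k+1) k!)`. -/
noncomputable def besselI (ν x : ℝ) : ℝ :=
  ∑' n : ℕ, (x / 2) ^ (ν + 2 * (n : ℝ)) / (Real.Gamma (ν + (n : ℝ) + 1) * (n : ℕ).factorial)

/-- Density of the Variance-Gamma distribution `VG₁(r, θ, σ, μ)`. -/
noncomputable def vg1pdf (r θ σ μ x : ℝ) : ℝ :=
  1 / (σ * Real.sqrt Real.pi * Real.Gamma (r / 2)) * Real.exp (θ * (x - μ) / σ ^ 2) *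
    (|x - μ| / (2 * Real.sqrt (θ ^ 2 + σ ^ 2))) ^ ((r - 1) / 2) *
    besselK ((r - 1) / 2) (Real.sqrt (θ ^ 2 + σ ^ 2) * |x - μ| / σ ^ 2)

/-- The Variance-Gamma distribution `VG₁(r, θ, σ, μ)` as a measure on `ℝ`. -/
noncomputable def vg1measure (r θ σ μ : ℝ) : Measure ℝ :=
  volume.withDensity fun x => ENNReal.ofReal (vg1pdf r θ σ μ x)

/-- Density of the Variance-Gamma distribution `VG₂(ν, α, β, μ)`. -/
noncomputable def vg2pdf (ν α β μ x : ℝ) : ℝ :=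
  (α ^ 2 - β ^ 2) ^ (ν + 1 / 2) / (Real.sqrt Real.pi * Real.Gamma (ν + 1 / 2)) *
    (|x - μ| / (2 * α)) ^ ν * Real.exp (β * (x - μ)) * besselK ν (α * |x - μ|)

/-- The Variance-Gamma distribution `VG₂(ν, α, β, μ)` as a measure on `ℝ`. -/
noncomputable def vg2measure (ν α β μ : ℝ) : Measure ℝ :=
  volume.withDensity fun x => ENNReal.ofReal (vg2pdf ν α β μ x)


/-!
Write `c = σX σY`, `τ = √(1 - ρ²)`, so that `XY = c ρ Z² + c τ Z W`. Conditionally on `Z = z ≠ 0`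
this is Gaussian with mean `c ρ z²` and variance `(c τ z)²`, so the law of `XY` has density
`∫ φ(z) φ_{cρz², (cτz)²}(x) dz`. Completing the square (using `ρ² + τ² = 1`) turns the integrand
into `C(x) |z|⁻¹ exp(-(p z² + q / z²))`, and the substitution `z = (q/p)^{1/4} e^{t/2}` turns
`∫₀^∞ z⁻¹ exp(-(p z² + q / z²)) dz` into `∫₀^∞ exp(-2√(pq) cosh t) dt = K₀(2√(pq))`.
-/

open Real Set
open scoped ENNReal NNReal

theorem integrable_comp_abs {E : Type*} [NormedAddCommGroup E] {f : ℝ → E}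
    (hf : IntegrableOn f (Ioi 0)) : Integrable fun x => f |x| := by
  have hIoi : IntegrableOn (fun x => f |x|) (Ioi 0) :=
    hf.congr_fun (fun x hx => by rw [abs_of_pos (mem_Ioi.mp hx)]) measurableSet_Ioi
  have hIic : IntegrableOn (fun x => f |x|) (Iic 0) := by
    have hneg : MeasurableEmbedding fun x : ℝ => -x := (Homeomorph.neg ℝ).measurableEmbedding
    rw [← Measure.map_neg_eq_self (volume : Measure ℝ), hneg.integrableOn_map_iff]
    simp_rw [Function.comp_def, abs_neg, neg_preimage, neg_Iic, neg_zero]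
    exact (integrableOn_Ici_iff_integrableOn_Ioi).mpr hIoi
  simpa only [Iic_union_Ioi, integrableOn_univ] using hIic.union hIoi

theorem besselK_zero_eq_integral (a : ℝ) : besselK 0 a = ∫ t in Ioi 0, exp (-(a * cosh t)) := by
  simp only [besselK, zero_mul, cosh_zero, mul_one, neg_mul]

theorem integrableOn_exp_neg_mul_cosh {a : ℝ} (ha : 0 < a) :
    IntegrableOn (fun t => exp (-(a * cosh t))) (Ioi 0) := by
  refine (exp_neg_integrableOn_Ioi 0 ha).mono' (by fun_prop) ?_
  filter_upwards [ae_restrict_mem measurableSet_Ioi] with t ht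
  rw [norm_of_nonneg (exp_pos _).le, exp_le_exp]
  have : t < cosh t := (self_le_sinh_iff.mpr (le_of_lt ht)).trans_lt (sinh_lt_cosh t)
  nlinarith

theorem integral_exp_neg_mul_cosh (a : ℝ) :
    ∫ t, exp (-(a * cosh t)) = 2 * besselK 0 a := by
  simpa only [cosh_abs, ← besselK_zero_eq_integral] using
    integral_comp_abs (f := fun t => exp (-(a * cosh t)))

theorem integrable_exp_neg_mul_cosh {a : ℝ} (ha : 0 < a) :
    Integrable fun t => exp (-(a * cosh t)) := by
  simpa only [cosh_abs] using integrable_comp_abs (integrableOn_exp_neg_mul_cosh ha)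

section BesselSubstitution

variable {p q : ℝ}

/-- The substitution `z = (q / p) ^ (1/4) * exp (t / 2)`, which turns `p z² + q / z²` into
`2 √(pq) cosh t` and the measure `dz / z` into `dt / 2`. -/
noncomputable def besselSubst (p q t : ℝ) : ℝ := √(√q / √p) * exp (t / 2)

theorem besselSubst_pos (t : ℝ) (hp : 0 < p) (hq : 0 < q) : 0 < besselSubst p q t := by
  unfold besselSubst; positivity

theorem hasDerivAt_besselSubst (t : ℝ) :
    HasDerivAt (besselSubst p q) (besselSubst p q t / 2) t := by
  refine (((hasDerivAt_id' t).div_const 2).exp.const_mul √(√q / √p)).congr_deriv ?_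
  rw [besselSubst]
  ring

theorem besselSubst_injective (hp : 0 < p) (hq : 0 < q) : Function.Injective (besselSubst p q) := by
  intro s t h
  have hb : √(√q / √p) ≠ 0 := by positivity
  have := exp_injective (mul_left_cancel₀ hb h)
  linarith

theorem range_besselSubst (hp : 0 < p) (hq : 0 < q) : range (besselSubst p q) = Ioi 0 := by
  refine (range_subset_iff.mpr fun t => besselSubst_pos t hp hq).antisymm fun z hz => ?_
  have hb : 0 < √(√q / √p) := by positivity
  refine ⟨2 * log (z / √(√q / √p)), ?_⟩
  simp only [besselSubst]
  rw [mul_div_cancel_left₀ _ two_ne_zero, exp_log (div_pos hz hb),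
    mul_div_cancel₀ _ hb.ne']

theorem mul_besselSubst_sq_add_div (t : ℝ) (hp : 0 < p) (hq : 0 < q) :
    p * besselSubst p q t ^ 2 + q / besselSubst p q t ^ 2 = 2 * √(p * q) * cosh t := by
  obtain ⟨u, hu, rfl⟩ : ∃ u, 0 < u ∧ p = u ^ 2 := ⟨√p, by positivity, (sq_sqrt hp.le).symm⟩
  obtain ⟨w, hw, rfl⟩ : ∃ w, 0 < w ∧ q = w ^ 2 := ⟨√q, by positivity, (sq_sqrt hq.le).symm⟩
  have hsq : besselSubst (u ^ 2) (w ^ 2) t ^ 2 = w / u * exp t := by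
    rw [besselSubst, mul_pow, sq_sqrt (by positivity), sqrt_sq hu.le, sqrt_sq hw.le, ← exp_nat_mul]
    push_cast; ring_nf
  rw [hsq, ← mul_pow, sqrt_sq (by positivity), cosh_eq, exp_neg]
  field_simp

theorem besselSubst_jacobian (t : ℝ) (hp : 0 < p) (hq : 0 < q) :
    |besselSubst p q t / 2| •
        ((besselSubst p q t)⁻¹ * exp (-(p * besselSubst p q t ^ 2 + q / besselSubst p q t ^ 2)))
      = 2⁻¹ * exp (-(2 * √(p * q) * cosh t)) := by
  have hz := besselSubst_pos t hp hq
  rw [mul_besselSubst_sq_add_div t hp hq, abs_of_pos (by positivity), smul_eq_mul]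
  field_simp

theorem integrableOn_inv_mul_exp_neg_mul_sq_add_div_sq (hp : 0 < p) (hq : 0 < q) :
    IntegrableOn (fun z => z⁻¹ * exp (-(p * z ^ 2 + q / z ^ 2))) (Ioi 0) := by
  rw [← range_besselSubst hp hq, ← image_univ, integrableOn_image_iff_integrableOn_abs_deriv_smul
    MeasurableSet.univ (fun t _ => (hasDerivAt_besselSubst t).hasDerivWithinAt)
    (besselSubst_injective hp hq).injOn]
  simp_rw [besselSubst_jacobian _ hp hq, integrableOn_univ]
  exact (integrable_exp_neg_mul_cosh (by positivity)).const_mul _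

theorem integral_inv_mul_exp_neg_mul_sq_add_div_sq (hp : 0 < p) (hq : 0 < q) :
    ∫ z in Ioi 0, z⁻¹ * exp (-(p * z ^ 2 + q / z ^ 2)) = besselK 0 (2 * √(p * q)) := by
  rw [← range_besselSubst hp hq, ← image_univ, integral_image_eq_integral_abs_deriv_smul
    MeasurableSet.univ (fun t _ => (hasDerivAt_besselSubst t).hasDerivWithinAt)
    (besselSubst_injective hp hq).injOn]
  simp_rw [besselSubst_jacobian _ hp hq, Measure.restrict_univ]
  rw [integral_const_mul, integral_exp_neg_mul_cosh]
  ring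

end BesselSubstitution

theorem gaussianReal_map_const_mul_add {μ : ℝ} {v : ℝ≥0} (a b : ℝ) :
    (gaussianReal μ v).map (fun w => a * w + b) = gaussianReal (a * μ + b) (‖a‖₊ ^ 2 * v) := by
  have hcomp : (fun w => a * w + b) = (· + b) ∘ (a * ·) := rfl
  have hvar : (.mk (a ^ 2) (sq_nonneg a) : ℝ≥0) = ‖a‖₊ ^ 2 := by ext; simp
  rw [hcomp, ← Measure.map_map (measurable_add_const b) (measurable_const_mul a),
    gaussianReal_map_const_mul, gaussianReal_map_add_const, hvar]

theorem MeasureTheory.Measure.map_prod_eq_withDensity_lintegral {α β γ : Type*} [MeasurableSpace α]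
    [MeasurableSpace β] [MeasurableSpace γ] {μ : Measure α} {ν : Measure β} {ρ : Measure γ}
    [SFinite μ] [SFinite ν] [SFinite ρ] {f : α → β → γ} (hf : Measurable (Function.uncurry f))
    {k : α → γ → ℝ≥0∞} (hk : Measurable (Function.uncurry k))
    (h : ∀ᵐ a ∂μ, ν.map (f a) = ρ.withDensity (k a)) :
    (μ.prod ν).map (Function.uncurry f) = ρ.withDensity fun x => ∫⁻ a, k a x ∂μ := by
  ext s hs
  have hsection : ∀ᵐ a ∂μ, ν (Prod.mk a ⁻¹' (Function.uncurry f ⁻¹' s)) = ∫⁻ x in s, k a x ∂ρ := by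
    filter_upwards [h] with a ha
    rw [← withDensity_apply _ hs, ← ha, Measure.map_apply hf.of_uncurry_left hs]
    rfl
  rw [Measure.map_apply hf hs, Measure.prod_apply (hf hs), withDensity_apply _ hs,
    lintegral_congr_ae hsection, lintegral_lintegral_swap hk.aemeasurable]

theorem vg1pdf_one_zero (θ σ x : ℝ) :
    vg1pdf 1 θ σ 0 x
      = (σ * π)⁻¹ * exp (θ * x / σ ^ 2) * besselK 0 (√(θ ^ 2 + σ ^ 2) * |x| / σ ^ 2) := by
  rw [vg1pdf, sub_zero, sub_self, zero_div, rpow_zero, Gamma_one_half_eq, mul_assoc σ,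
    mul_self_sqrt pi_pos.le, one_div, mul_one]

section ProductDensity

variable {c τ ρ : ℝ}

theorem gaussianPDFReal_mul_gaussianPDFReal_eq (hc : 0 < c) (hτ : 0 < τ) (hρτ : ρ ^ 2 + τ ^ 2 = 1)
    (x : ℝ) {z : ℝ} (hz : z ≠ 0) :
    gaussianPDFReal 0 1 z * gaussianPDFReal (c * ρ * z ^ 2) (‖c * τ * z‖₊ ^ 2) x
      = (2 * π * c * τ)⁻¹ * exp (ρ * x / (c * τ ^ 2)) *
        (|z|⁻¹ * exp (-((2 * τ ^ 2)⁻¹ * |z| ^ 2 + x ^ 2 * (2 * c ^ 2 * τ ^ 2)⁻¹ / |z| ^ 2))) := by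
  have habs : 0 < |z| := abs_pos.mpr hz
  have hsqrt : √(2 * π * (c * τ * z) ^ 2) = √(2 * π) * (c * τ * |z|) := by
    rw [sqrt_mul (by positivity), sqrt_sq_eq_abs, abs_mul, abs_mul, abs_of_pos hc, abs_of_pos hτ]
  simp only [gaussianPDFReal, NNReal.coe_one, NNReal.coe_pow, coe_nnnorm, norm_eq_abs, sq_abs,
    sub_zero, mul_one, hsqrt]
  have hexp : -z ^ 2 / 2 + -(x - c * ρ * z ^ 2) ^ 2 / (2 * (c * τ * z) ^ 2)
      = ρ * x / (c * τ ^ 2) + -((2 * τ ^ 2)⁻¹ * z ^ 2 + x ^ 2 * (2 * c ^ 2 * τ ^ 2)⁻¹ / z ^ 2) := by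
    field_simp
    linear_combination (-(z ^ 4 * c ^ 2)) * hρτ
  have h2π : √(2 * π) * √(2 * π) = 2 * π := mul_self_sqrt (by positivity)
  calc _ = (√(2 * π) * √(2 * π))⁻¹ * (c * τ * |z|)⁻¹ *
        exp (-z ^ 2 / 2 + -(x - c * ρ * z ^ 2) ^ 2 / (2 * (c * τ * z) ^ 2)) := by
        rw [exp_add]; field_simp
    _ = _ := by rw [hexp, exp_add, h2π]; field_simp

theorem measurable_gaussianPDF_mixture :
    Measurable (Function.uncurry fun z x => gaussianPDF (c * ρ * z ^ 2) (‖c * τ * z‖₊ ^ 2) x) := by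
  simp only [Function.uncurry_def, gaussianPDF, gaussianPDFReal, NNReal.coe_pow, coe_nnnorm]
  fun_prop

theorem lintegral_gaussianPDF_mixture (hc : 0 < c) (hτ : 0 < τ) (hρτ : ρ ^ 2 + τ ^ 2 = 1)
    {x : ℝ} (hx : x ≠ 0) :
    ∫⁻ z, gaussianPDF (c * ρ * z ^ 2) (‖c * τ * z‖₊ ^ 2) x ∂gaussianReal 0 1
      = ENNReal.ofReal (vg1pdf 1 (ρ * c) (c * τ) 0 x) := by
  set p : ℝ := (2 * τ ^ 2)⁻¹
  set q : ℝ := x ^ 2 * (2 * c ^ 2 * τ ^ 2)⁻¹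
  have hp : 0 < p := by positivity
  have hq : 0 < q := by positivity
  set C : ℝ := (2 * π * c * τ)⁻¹ * exp (ρ * x / (c * τ ^ 2))
  set h : ℝ → ℝ := fun y => y⁻¹ * exp (-(p * y ^ 2 + q / y ^ 2))
  have hsqrt_pq : √(p * q) = |x| / (2 * c * τ ^ 2) := by
    rw [← sqrt_sq (by positivity : 0 ≤ |x| / (2 * c * τ ^ 2)), div_pow, sq_abs]
    congr 1
    simp only [p, q]
    field_simp
  have hsqrt_c : √((ρ * c) ^ 2 + (c * τ) ^ 2) = c := by
    rw [show (ρ * c) ^ 2 + (c * τ) ^ 2 = c ^ 2 by linear_combination c ^ 2 * hρτ, sqrt_sq hc.le]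
  calc ∫⁻ z, gaussianPDF (c * ρ * z ^ 2) (‖c * τ * z‖₊ ^ 2) x ∂gaussianReal 0 1
      = ∫⁻ z, ENNReal.ofReal (C * h |z|) := by
        rw [gaussianReal_of_var_ne_zero 0 one_ne_zero, lintegral_withDensity_eq_lintegral_mul _
          (measurable_gaussianPDF 0 1) (measurable_gaussianPDF_mixture.of_uncurry_right)]
        refine lintegral_congr_ae ?_
        filter_upwards [Measure.ae_ne (volume : Measure ℝ) 0] with z hz
        rw [Pi.mul_apply, gaussianPDF, gaussianPDF,
          ← ENNReal.ofReal_mul (gaussianPDFReal_nonneg _ _ _),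
          gaussianPDFReal_mul_gaussianPDFReal_eq hc hτ hρτ x hz]
    _ = ENNReal.ofReal (C * ∫ z, h |z|) := by
        have hint := integrable_comp_abs (integrableOn_inv_mul_exp_neg_mul_sq_add_div_sq hp hq)
        rw [← integral_const_mul, ofReal_integral_eq_lintegral_ofReal (hint.const_mul C)]
        exact ae_of_all _ fun z => by positivity
    _ = ENNReal.ofReal (vg1pdf 1 (ρ * c) (c * τ) 0 x) := by
        rw [integral_comp_abs, integral_inv_mul_exp_neg_mul_sq_add_div_sq hp hq, vg1pdf_one_zero,
          hsqrt_pq, hsqrt_c]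
        congr 1
        simp only [C]
        field_simp

end ProductDensity

/-- Bivariate normal product: modelling `(X, Y)` bivariate normal with zero means,
variances `σX²`, `σY²` and correlation `ρ` via the standard construction from two
independent standard normals. The product `XY` is `VG₁(1, ρσXσY, σXσY√(1-ρ²), 0)`. -/
theorem stmt10 {Ω : Type*} [MeasureSpace Ω] [IsProbabilityMeasure (ℙ : Measure Ω)]
    (σX σY ρ : ℝ) (hσX : 0 < σX) (hσY : 0 < σY) (hρ : -1 < ρ) (hρ' : ρ < 1)
    (Z W : Ω → ℝ) (hZ : Measurable Z) (hW : Measurable W)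
    (hZlaw : Measure.map Z ℙ = gaussianReal 0 1)
    (hWlaw : Measure.map W ℙ = gaussianReal 0 1)
    (hind : IndepFun Z W ℙ)
    (X Y : Ω → ℝ)
    (hXY : ∀ ω, X ω = σX * Z ω ∧ Y ω = σY * (ρ * Z ω + Real.sqrt (1 - ρ ^ 2) * W ω)) :
    Measure.map (fun ω => X ω * Y ω) ℙ
      = vg1measure 1 (ρ * σX * σY) (σX * σY * Real.sqrt (1 - ρ ^ 2)) 0 := by
  set τ := √(1 - ρ ^ 2)
  set c := σX * σY
  have hc : 0 < c := mul_pos hσX hσY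
  have hτ : 0 < τ := sqrt_pos.mpr (by nlinarith)
  have hρτ : ρ ^ 2 + τ ^ 2 = 1 := by rw [sq_sqrt (by nlinarith)]; ring
  set f : ℝ → ℝ → ℝ := fun z w => c * τ * z * w + c * ρ * z ^ 2
  have hf : Measurable (Function.uncurry f) := by fun_prop
  have hXY_eq : (fun ω => X ω * Y ω) = Function.uncurry f ∘ fun ω => (Z ω, W ω) := by
    funext ω
    simp only [Function.comp_apply, Function.uncurry_apply_pair, f, (hXY ω).1, (hXY ω).2, c]
    ring
  have hsection : ∀ᵐ z ∂gaussianReal 0 1,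
      (gaussianReal 0 1).map (f z)
        = volume.withDensity (gaussianPDF (c * ρ * z ^ 2) (‖c * τ * z‖₊ ^ 2)) := by
    filter_upwards [(gaussianReal_absolutelyContinuous 0 one_ne_zero).ae_le
      (Measure.ae_ne (volume : Measure ℝ) 0)] with z hz
    rw [gaussianReal_map_const_mul_add, mul_zero, zero_add, mul_one,
      gaussianReal_of_var_ne_zero _ (pow_ne_zero 2 (nnnorm_ne_zero_iff.mpr (by positivity)))]
  rw [hXY_eq, ← Measure.map_map hf (hZ.prodMk hW),
    (indepFun_iff_map_prod_eq_prod_map_map hZ.aemeasurable hW.aemeasurable).mp hind, hZlaw, hWlaw,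
    Measure.map_prod_eq_withDensity_lintegral hf measurable_gaussianPDF_mixture hsection,
    mul_assoc ρ]
  refine withDensity_congr_ae ?_
  filter_upwards [Measure.ae_ne (volume : Measure ℝ) 0] with x hx
  exact lintegral_gaussianPDF_mixture hc hτ hρτ hx
end

section
/- If W ~ VG₂(ν, α, β, 0) and |t + β| < α, then the moment generating function satisfies E[e^{tW}] = ((α² − β²)/(α² − (β+t)²))^{ν + 1/2}. -/
open MeasureTheory ProbabilityTheory

/-!
The substitution `u = (|x| / α) eˢ` turns the cosh-integral defining `K_ν(α|x|)` into
`∫₀^∞ u^(ν-1) exp(-α²u/2 - x²/(2u)) du`, exhibiting the `VG₂` density as a Gamma-weighted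
mixture of centred Gaussian kernels of variance `u`, tilted by `e^{βx}`. By Tonelli,
integrating `e^{tx}` first in `x` gives the Gaussian integral `√(2πu) e^{(β+t)²u/2}`, and what
remains is the Gamma integral
`∫₀^∞ u^(ν-1/2) e^{-(α²-(β+t)²)u/2} du = Γ(ν+1/2) (2/(α²-(β+t)²))^(ν+1/2)`;
the normalising constants then cancel.
-/

open Real Set

lemma sq_div_four_le_cosh (s : ℝ) : s ^ 2 / 4 ≤ cosh s := by
  have h := quadratic_le_exp_of_nonneg (abs_nonneg s)
  rw [sq_abs] at h
  rw [← cosh_abs, cosh_eq]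
  nlinarith [exp_pos (-|s|), abs_nonneg s]

lemma exp_mul_sub_mul_sq_eq (m : ℝ) {c : ℝ} (hc : c ≠ 0) (x : ℝ) :
    exp (m * x - c * x ^ 2) = exp (m ^ 2 / (4 * c)) * exp (-c * (x - m / (2 * c)) ^ 2) := by
  rw [← exp_add]; congr 1; field_simp; ring

lemma integrable_exp_mul_sub_mul_sq (m : ℝ) {c : ℝ} (hc : 0 < c) :
    Integrable fun x : ℝ => exp (m * x - c * x ^ 2) := by
  simp_rw [exp_mul_sub_mul_sq_eq m hc.ne']
  exact ((integrable_exp_neg_mul_sq hc).comp_sub_right _).const_mul _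

lemma lintegral_ofReal_exp_mul_sub_mul_sq (m : ℝ) {c : ℝ} (hc : 0 < c) :
    ∫⁻ x : ℝ, ENNReal.ofReal (exp (m * x - c * x ^ 2))
      = ENNReal.ofReal (√(π / c) * exp (m ^ 2 / (4 * c))) := by
  rw [← ofReal_integral_eq_lintegral_ofReal (integrable_exp_mul_sub_mul_sq m hc)
    (ae_of_all _ fun _ => (exp_pos _).le)]
  simp_rw [exp_mul_sub_mul_sq_eq m hc.ne']
  rw [integral_const_mul, integral_sub_right_eq_self (fun x => exp (-c * x ^ 2)),
    integral_gaussian, mul_comm]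

lemma integrable_exp_mul_sub_mul_cosh (ν : ℝ) {z : ℝ} (hz : 0 < z) :
    Integrable fun s : ℝ => exp (ν * s - z * cosh s) := by
  refine (integrable_exp_mul_sub_mul_sq ν (by positivity : 0 < z / 4)).mono' (by fun_prop)
    (ae_of_all _ fun s => ?_)
  rw [norm_of_nonneg (exp_pos _).le]
  exact exp_le_exp.2 (by nlinarith [sq_div_four_le_cosh s])

lemma two_mul_besselK_eq_integral (ν : ℝ) {z : ℝ} (hz : 0 < z) :
    2 * besselK ν z = ∫ s, exp (ν * s - z * cosh s) := by
  set f := fun s => exp (ν * s - z * cosh s)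
  have hf : Integrable f := integrable_exp_mul_sub_mul_cosh ν hz
  calc 2 * besselK ν z = ∫ s, exp (-z * cosh |s|) * cosh (ν * |s|) := integral_comp_abs.symm
    _ = ∫ s, (f s + f (-s)) / 2 := by
      congr 1; ext s
      rw [cosh_abs, show cosh (ν * |s|) = cosh (ν * s) by
        rcases abs_cases s with ⟨h, _⟩ | ⟨h, _⟩ <;> rw [h]
        rw [mul_neg, cosh_neg]]
      simp only [f, cosh_neg, cosh_eq (ν * s), exp_sub, exp_neg, mul_neg, neg_mul]
      field_simp
    _ = ∫ s, f s := by
      rw [integral_div, integral_add hf hf.comp_neg, integral_neg_eq_self]; ring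

lemma image_const_mul_exp {c : ℝ} (hc : 0 < c) : (fun s => c * exp s) '' univ = Ioi 0 := by
  ext u
  simp only [image_univ, mem_range, mem_Ioi]
  refine ⟨fun ⟨s, hs⟩ => hs ▸ by positivity, fun hu => ⟨log (u / c), ?_⟩⟩
  rw [exp_log (div_pos hu hc)]
  field_simp

lemma lintegral_rpow_mul_exp_eq_besselK (ν : ℝ) {c z : ℝ} (hc : 0 < c) (hz : 0 < z) :
    ∫⁻ u in Ioi 0, ENNReal.ofReal (u ^ (ν - 1) * exp (-(z / 2) * (u / c + c / u)))
      = ENNReal.ofReal (c ^ ν * (2 * besselK ν z)) := by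
  have hsubst : ∀ s, ENNReal.ofReal |c * exp s| * ENNReal.ofReal ((c * exp s) ^ (ν - 1) *
      exp (-(z / 2) * (c * exp s / c + c / (c * exp s))))
        = ENNReal.ofReal (c ^ ν * exp (ν * s - z * cosh s)) := by
    intro s
    have hexponent : -(z / 2) * (c * exp s / c + c / (c * exp s)) = -(z * cosh s) := by
      rw [cosh_eq, exp_neg]; field_simp
    rw [hexponent, ← ENNReal.ofReal_mul (abs_nonneg _), abs_of_pos (by positivity),
      mul_rpow hc.le (exp_pos s).le, ← exp_mul, rpow_sub_one hc.ne', exp_sub,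
      show ν * s = s + s * (ν - 1) by ring, exp_add, exp_neg]
    congr 1
    field_simp
  rw [← image_const_mul_exp hc, lintegral_image_eq_lintegral_abs_deriv_mul MeasurableSet.univ
    (fun s _ => ((hasDerivAt_exp s).const_mul c).hasDerivWithinAt)
    ((mul_right_injective₀ hc.ne').comp exp_injective).injOn, Measure.restrict_univ]
  simp_rw [hsubst]
  rw [← ofReal_integral_eq_lintegral_ofReal ((integrable_exp_mul_sub_mul_cosh ν hz).const_mul _)
    (ae_of_all _ fun _ => by positivity), integral_const_mul, two_mul_besselK_eq_integral ν hz]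

lemma ofReal_besselK_mul_exp_eq_lintegral (ν θ : ℝ) {α x : ℝ} (hα : 0 < α) (hx : x ≠ 0) :
    ENNReal.ofReal (2 ^ (ν + 1) * ((|x| / (2 * α)) ^ ν * besselK ν (α * |x|)) * exp (θ * x))
      = ∫⁻ u in Ioi 0, ENNReal.ofReal (u ^ (ν - 1) * exp (-(α ^ 2 / 2 * u))) *
          ENNReal.ofReal (exp (θ * x - (2 * u)⁻¹ * x ^ 2)) := by
  have hx' : 0 < |x| := abs_pos.2 hx
  have hkernel : ∀ u ∈ Ioi (0 : ℝ),
      ENNReal.ofReal (u ^ (ν - 1) * exp (-(α ^ 2 / 2 * u))) *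
        ENNReal.ofReal (exp (θ * x - (2 * u)⁻¹ * x ^ 2))
      = ENNReal.ofReal (exp (θ * x)) * ENNReal.ofReal (u ^ (ν - 1) *
          exp (-(α * |x| / 2) * (u / (|x| / α) + |x| / α / u))) := by
    intro u (hu : 0 < u)
    rw [← ENNReal.ofReal_mul (by positivity), ← ENNReal.ofReal_mul (by positivity)]
    congr 1
    have hexponent : -(α * |x| / 2) * (u / (|x| / α) + |x| / α / u)
        = -(α ^ 2 / 2 * u) + -((2 * u)⁻¹ * x ^ 2) := by
      rw [← sq_abs x]; field_simp; ring
    simp only [hexponent, exp_add, exp_sub, exp_neg]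
    ring
  rw [setLIntegral_congr_fun measurableSet_Ioi hkernel,
    lintegral_const_mul' _ _ ENNReal.ofReal_ne_top,
    lintegral_rpow_mul_exp_eq_besselK ν (div_pos hx' hα) (mul_pos hα hx'),
    ← ENNReal.ofReal_mul (exp_pos _).le, div_rpow hx'.le (by positivity), div_rpow hx'.le hα.le,
    mul_rpow zero_le_two hα.le, rpow_add_one two_ne_zero]
  congr 1
  field_simp

lemma lintegral_ofReal_rpow_mul_exp_neg_mul_Ioi {a r : ℝ} (ha : 0 < a) (hr : 0 < r) :
    ∫⁻ u in Ioi 0, ENNReal.ofReal (u ^ (a - 1) * exp (-(r * u)))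
      = ENNReal.ofReal ((1 / r) ^ a * Gamma a) := by
  have hint : IntegrableOn (fun u : ℝ => u ^ (a - 1) * exp (-(r * u))) (Ioi 0) := by
    simpa only [rpow_one, neg_mul] using
      integrableOn_rpow_mul_exp_neg_mul_rpow (by linarith : -1 < a - 1) one_pos hr
  rw [← ofReal_integral_eq_lintegral_ofReal hint
    ((ae_restrict_iff' measurableSet_Ioi).2 (ae_of_all _ fun u (hu : 0 < u) => by positivity)),
    integral_rpow_mul_exp_neg_mul_Ioi ha hr]

lemma lintegral_lintegral_gaussian_mixture {ν α θ : ℝ} (hν : -1 / 2 < ν) (hθ : |θ| < α) :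
    ∫⁻ x, ∫⁻ u in Ioi 0, ENNReal.ofReal (u ^ (ν - 1) * exp (-(α ^ 2 / 2 * u))) *
        ENNReal.ofReal (exp (θ * x - (2 * u)⁻¹ * x ^ 2))
      = ENNReal.ofReal
          (√(2 * π) * ((2 / (α ^ 2 - θ ^ 2)) ^ (ν + 1 / 2) * Gamma (ν + 1 / 2))) := by
  have hr : 0 < (α ^ 2 - θ ^ 2) / 2 := by
    have := abs_lt.1 hθ; nlinarith
  have hgauss : ∀ u ∈ Ioi (0 : ℝ),
      ∫⁻ x, ENNReal.ofReal (u ^ (ν - 1) * exp (-(α ^ 2 / 2 * u))) *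
        ENNReal.ofReal (exp (θ * x - (2 * u)⁻¹ * x ^ 2))
      = ENNReal.ofReal (√(2 * π)) *
          ENNReal.ofReal (u ^ (ν + 1 / 2 - 1) * exp (-((α ^ 2 - θ ^ 2) / 2 * u))) := by
    intro u (hu : 0 < u)
    rw [lintegral_const_mul' _ _ ENNReal.ofReal_ne_top,
      lintegral_ofReal_exp_mul_sub_mul_sq θ (by positivity),
      ← ENNReal.ofReal_mul (by positivity), ← ENNReal.ofReal_mul (by positivity)]
    congr 1
    have hexp : exp (-(α ^ 2 / 2 * u)) * exp (θ ^ 2 / (4 * (2 * u)⁻¹))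
        = exp (-((α ^ 2 - θ ^ 2) / 2 * u)) := by
      rw [← exp_add]; congr 1; field_simp; ring
    rw [div_inv_eq_mul, show π * (2 * u) = 2 * π * u by ring, sqrt_mul' _ hu.le, sqrt_eq_rpow u,
      show ν + 1 / 2 - 1 = ν - 1 + 1 / 2 by ring, rpow_add hu, ← hexp]
    ring
  rw [lintegral_lintegral_swap (by fun_prop), setLIntegral_congr_fun measurableSet_Ioi hgauss,
    lintegral_const_mul' _ _ ENNReal.ofReal_ne_top,
    lintegral_ofReal_rpow_mul_exp_neg_mul_Ioi (by linarith) hr, one_div_div,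
    ← ENNReal.ofReal_mul (by positivity)]

@[fun_prop]
lemma measurable_besselK (ν : ℝ) : Measurable (besselK ν) :=
  (Continuous.stronglyMeasurable (by fun_prop : Continuous fun p : ℝ × ℝ =>
    exp (-p.1 * cosh p.2) * cosh (ν * p.2))).integral_prod_right'.measurable

lemma vg2pdf_zero_mul_exp_eq (ν α β t x : ℝ) :
    vg2pdf ν α β 0 x * exp (t * x)
      = (α ^ 2 - β ^ 2) ^ (ν + 1 / 2) / (√π * Gamma (ν + 1 / 2)) / 2 ^ (ν + 1) *
        (2 ^ (ν + 1) * ((|x| / (2 * α)) ^ ν * besselK ν (α * |x|)) * exp ((β + t) * x)) := by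
  rw [vg2pdf, sub_zero, add_mul, exp_add]
  field_simp

lemma vg2_const_mul_mixture_integral {ν A B G : ℝ} (hA : 0 < A) (hB : 0 < B) (hG : 0 < G) :
    A ^ (ν + 1 / 2) / (√π * G) / 2 ^ (ν + 1) * (√(2 * π) * ((2 / B) ^ (ν + 1 / 2) * G))
      = (A / B) ^ (ν + 1 / 2) := by
  have h2 : (2 : ℝ) ^ (ν + 1) = √2 * 2 ^ (ν + 1 / 2) := by
    rw [sqrt_eq_rpow, ← rpow_add two_pos]; ring_nf
  rw [sqrt_mul zero_le_two, div_rpow zero_le_two hB.le, div_rpow hA.le hB.le, h2]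
  field_simp

theorem stmt12 (ν α β t : ℝ) (hν : -1/2 < ν) (hαβ : |β| < α) (ht : |t + β| < α) :
    ∫ x, Real.exp (t * x) ∂(vg2measure ν α β 0)
      = ((α ^ 2 - β ^ 2) / (α ^ 2 - (β + t) ^ 2)) ^ (ν + 1 / 2) := by
  have hα : 0 < α := (abs_nonneg β).trans_lt hαβ
  have hA : 0 < α ^ 2 - β ^ 2 := by have := abs_lt.1 hαβ; nlinarith
  have hB : 0 < α ^ 2 - (β + t) ^ 2 := by have := abs_lt.1 ht; nlinarith
  have hG : 0 < Gamma (ν + 1 / 2) := Gamma_pos_of_pos (by linarith)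
  have hC : 0 ≤ (α ^ 2 - β ^ 2) ^ (ν + 1 / 2) / (√π * Gamma (ν + 1 / 2)) / 2 ^ (ν + 1) := by
    positivity
  rw [integral_eq_lintegral_of_nonneg_ae (ae_of_all _ fun x => (exp_pos _).le) (by fun_prop),
    vg2measure, lintegral_withDensity_eq_lintegral_mul _
      (by unfold vg2pdf; fun_prop : Measurable (vg2pdf ν α β 0)).ennreal_ofReal (by fun_prop)]
  simp only [Pi.mul_apply, ← ENNReal.ofReal_mul' (exp_pos _).le, vg2pdf_zero_mul_exp_eq]
  simp only [ENNReal.ofReal_mul hC]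
  rw [lintegral_const_mul' _ _ ENNReal.ofReal_ne_top, lintegral_congr_ae ((volume.ae_ne 0).mono
      fun x hx => ofReal_besselK_mul_exp_eq_lintegral ν (β + t) hα hx),
    lintegral_lintegral_gaussian_mixture hν (by rwa [add_comm]),
    ← ENNReal.ofReal_mul (by positivity), vg2_const_mul_mixture_integral hA hB hG,
    ENNReal.toReal_ofReal (by positivity)]
end
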